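/- arXiv:1712.06315 — 5 statements merged into one kernel-verified Lean document; each statement's English description precedes it below -/
import Mathlib

section
/- For every b ≥ 0 and every t ≥ 0, the function s ↦ K(s,t) √b e^{-b s} is Lebesgue integrable on (0, ∞) and ∫_0^∞ K(s,t) √b e^{-b s} ds = e^{-b t} − 1. -/
/-!
Writing `k(s) = s^{-1/2}` for `s > 0` (and `0` otherwise), `K(·,t) = (k(· - t) - k)/√π`, so the
integral splits into two translated Gamma integrals,
`∫_a^∞ (s - a)^{-1/2} e^{-bs} ds = e^{-ba} Γ(1/2) b^{-1/2} = e^{-ba} √(π/b)` for `b > 0`;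
since `t ≥ 0`, restricting to `(0, ∞)` does not cut the shifted one. For `b = 0` the integrand
vanishes.
-/

open MeasureTheory Real

/-- The kernel `K(s,t)` from the paper. -/
noncomputable def K (s t : ℝ) : ℝ :=
  (1 / Real.sqrt Real.pi) * (if t < s then (s - t) ^ (-(1 / 2 : ℝ)) else 0)
    - (1 / Real.sqrt Real.pi) * (if 0 < s then s ^ (-(1 / 2 : ℝ)) else 0)

open Set

section

variable {b c : ℝ}

lemma integrableOn_rpow_mul_exp_neg_mul (hc : 0 < c) (hb : 0 < b) :
    IntegrableOn (fun x : ℝ => x ^ (c - 1) * exp (-b * x)) (Ioi 0) := by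
  simpa only [rpow_one] using
    integrableOn_rpow_mul_exp_neg_mul_rpow (s := c - 1) (by linarith) one_pos hb

lemma indicator_Ioi_rpow_sub_mul_exp_neg_mul (a : ℝ) :
    (Ioi a).indicator (fun x => (x - a) ^ (c - 1) * exp (-b * x)) =
      fun x => exp (-b * a) * (Ioi 0).indicator (fun y => y ^ (c - 1) * exp (-b * y)) (x - a) := by
  ext x
  by_cases hx : a < x
  · rw [indicator_of_mem (mem_Ioi.2 hx), indicator_of_mem (mem_Ioi.2 (sub_pos.2 hx)),
      mul_left_comm, ← exp_add]
    ring_nf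
  · rw [indicator_of_notMem (by simpa using hx), indicator_of_notMem (by simpa using hx), mul_zero]

lemma integrable_indicator_Ioi_rpow_sub_mul_exp_neg_mul (hc : 0 < c) (hb : 0 < b) (a : ℝ) :
    Integrable ((Ioi a).indicator (fun x => (x - a) ^ (c - 1) * exp (-b * x))) := by
  rw [indicator_Ioi_rpow_sub_mul_exp_neg_mul]
  exact (((integrable_indicator_iff measurableSet_Ioi).2
    (integrableOn_rpow_mul_exp_neg_mul hc hb)).comp_sub_right a).const_mul _

lemma integral_indicator_Ioi_rpow_sub_mul_exp_neg_mul (hc : 0 < c) (hb : 0 < b) (a : ℝ) :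
    ∫ x, (Ioi a).indicator (fun x => (x - a) ^ (c - 1) * exp (-b * x)) x =
      exp (-b * a) * ((1 / b) ^ c * Gamma c) := by
  rw [indicator_Ioi_rpow_sub_mul_exp_neg_mul, integral_const_mul,
    integral_sub_right_eq_self
      (fun y => (Ioi 0).indicator (fun y => y ^ (c - 1) * exp (-b * y)) y),
    integral_indicator measurableSet_Ioi, ← integral_rpow_mul_exp_neg_mul_Ioi hc hb]
  simp only [neg_mul]

end

/-- For `b ≥ 0` and `t ≥ 0`, the function `s ↦ K(s,t) √b e^{-b s}` is Lebesgue integrable on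
`(0, ∞)` and `∫_0^∞ K(s,t) √b e^{-b s} ds = e^{-b t} − 1`. -/
theorem stmt_1 (b t : ℝ) (hb : 0 ≤ b) (ht : 0 ≤ t) :
    IntegrableOn (fun s => K s t * Real.sqrt b * Real.exp (-b * s)) (Set.Ioi 0) ∧
      ∫ s in Set.Ioi (0 : ℝ), K s t * Real.sqrt b * Real.exp (-b * s)
        = Real.exp (-b * t) - 1 := by
  rcases hb.eq_or_lt with rfl | hb
  · simp
  set G : ℝ → ℝ → ℝ := fun a =>
    (Ioi a).indicator fun x => (x - a) ^ ((1 / 2 : ℝ) - 1) * exp (-b * x)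
  have hK : (fun s => K s t * √b * exp (-b * s)) = fun s => √b / √π * (G t s - G 0 s) := by
    ext s
    simp only [K, G, indicator_apply, mem_Ioi, sub_zero,
      show (1 / 2 : ℝ) - 1 = -(1 / 2) by norm_num]
    split_ifs <;> ring
  have hG_int (a : ℝ) : Integrable (G a) :=
    integrable_indicator_Ioi_rpow_sub_mul_exp_neg_mul (by norm_num) hb a
  have hG (a : ℝ) (ha : 0 ≤ a) : ∫ s in Ioi 0, G a s = exp (-b * a) * (√π / √b) := by
    rw [setIntegral_eq_integral_of_forall_compl_eq_zero (s := Ioi 0) (f := G a)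
        fun x hx => indicator_of_notMem (fun h => hx (ha.trans_lt h)) _,
      integral_indicator_Ioi_rpow_sub_mul_exp_neg_mul (by norm_num) hb, Gamma_one_half_eq,
      ← sqrt_eq_rpow, sqrt_div' _ hb.le, sqrt_one]
    ring
  refine ⟨hK ▸ (((hG_int t).sub (hG_int 0)).const_mul _).integrableOn, ?_⟩
  rw [hK, integral_const_mul, integral_sub (hG_int t).integrableOn (hG_int 0).integrableOn,
    hG t ht, hG 0 le_rfl, mul_zero, exp_zero]
  field_simp
end

section
/- For every t ≥ 0 one has ∫_0^∞ |K(s,t)| ds = (4/√π) √t. -/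
/-!
On `(0, t]` only the second term of `K` survives, so `|K s t| = s^{-1/2}/√π`, whose integral
is `2√t/√π`. On `(t, ∞)` the kernel is nonnegative, since `s ↦ s^{-1/2}` is decreasing, and it
has the primitive `(2√(s - t) - 2√s)/√π`, which tends to `0` at infinity because
`√s - √(s - t) = t / (√s + √(s - t))`; this contributes another `2√t/√π`.
-/

open MeasureTheory Real

open Filter Set Topology

namespace Real

/-- Both sides vanish for `x ≤ 0`: `rpow` of a negative base at exponent `-1/2` carries the factor
`cos (-π/2) = 0`. -/
lemma rpow_neg_half_eq_inv_sqrt (x : ℝ) : x ^ (-(1 / 2 : ℝ)) = (√x)⁻¹ := by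
  rcases lt_or_ge x 0 with hx | hx
  · rw [rpow_def_of_neg hx, sqrt_eq_zero_of_nonpos hx.le, inv_zero,
      show -(1 / 2 : ℝ) * π = -(π / 2) by ring, cos_neg, cos_pi_div_two, mul_zero]
  · rw [rpow_neg hx, sqrt_eq_rpow]

lemma rpow_neg_half_of_nonpos {x : ℝ} (hx : x ≤ 0) : x ^ (-(1 / 2 : ℝ)) = 0 := by
  rw [rpow_neg_half_eq_inv_sqrt, sqrt_eq_zero_of_nonpos hx, inv_zero]

lemma rpow_neg_half_nonneg (x : ℝ) : 0 ≤ x ^ (-(1 / 2 : ℝ)) := by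
  rw [rpow_neg_half_eq_inv_sqrt]
  positivity

lemma rpow_neg_half_le_rpow_neg_half_sub {a x : ℝ} (ha : 0 ≤ a) (hx : a < x) :
    x ^ (-(1 / 2 : ℝ)) ≤ (x - a) ^ (-(1 / 2 : ℝ)) :=
  rpow_le_rpow_of_nonpos (sub_pos.2 hx) (sub_le_self x ha) (by norm_num)

lemma hasDerivAt_two_mul_sqrt_sub {a x : ℝ} (hx : a < x) :
    HasDerivAt (fun y => 2 * √(y - a)) ((x - a) ^ (-(1 / 2 : ℝ))) x := by
  have h := ((hasDerivAt_sqrt (sub_pos.2 hx).ne').comp x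
    ((hasDerivAt_id x).sub_const a)).const_mul 2
  refine h.congr_deriv ?_
  rw [rpow_neg_half_eq_inv_sqrt]
  field_simp

lemma tendsto_sqrt_sub_sub_sqrt_atTop (a : ℝ) :
    Tendsto (fun x => √(x - a) - √x) atTop (𝓝 0) := by
  have hquot : ∀ᶠ x in atTop, -a / (√x + √(x - a)) = √(x - a) - √x := by
    filter_upwards [eventually_gt_atTop 0, eventually_gt_atTop a] with x hx hxa
    have hsum : 0 < √x + √(x - a) := by positivity
    rw [div_eq_iff hsum.ne']
    nlinarith [sq_sqrt hx.le, sq_sqrt (sub_pos.2 hxa).le]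
  have hsum : Tendsto (fun x => √x + √(x - a)) atTop atTop := by
    simpa [add_comm] using tendsto_atTop_add_left_of_le' atTop 0
      (Eventually.of_forall fun x => sqrt_nonneg (x - a)) tendsto_sqrt_atTop
  exact (tendsto_const_nhds.div_atTop hsum).congr' hquot

lemma integrableOn_Ioc_rpow_neg_half (t : ℝ) :
    IntegrableOn (fun s : ℝ => s ^ (-(1 / 2 : ℝ))) (Ioc 0 t) :=
  (intervalIntegral.intervalIntegrable_rpow' (by norm_num)).1

lemma integral_Ioc_rpow_neg_half {t : ℝ} (ht : 0 ≤ t) :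
    ∫ s in Ioc 0 t, s ^ (-(1 / 2 : ℝ)) = 2 * √t := by
  rw [← intervalIntegral.integral_of_le ht, integral_rpow (Or.inl (by norm_num)), sqrt_eq_rpow]
  norm_num
  ring

lemma hasDerivAt_two_mul_sqrt_sub_sub {a x : ℝ} (ha : 0 ≤ a) (hx : a < x) :
    HasDerivAt (fun y => 2 * √(y - a) - 2 * √y)
      ((x - a) ^ (-(1 / 2 : ℝ)) - x ^ (-(1 / 2 : ℝ))) x := by
  have h := hasDerivAt_two_mul_sqrt_sub (a := 0) (ha.trans_lt hx)
  simp only [sub_zero] at h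
  exact (hasDerivAt_two_mul_sqrt_sub hx).sub h

lemma integrableOn_Ioi_rpow_neg_half_sub_sub {a : ℝ} (ha : 0 ≤ a) :
    IntegrableOn (fun x => (x - a) ^ (-(1 / 2 : ℝ)) - x ^ (-(1 / 2 : ℝ))) (Ioi a) := by
  refine integrableOn_Ioi_deriv_of_nonneg (by fun_prop)
    (fun x hx => hasDerivAt_two_mul_sqrt_sub_sub ha hx)
    (fun x hx => sub_nonneg.2 (rpow_neg_half_le_rpow_neg_half_sub ha hx)) (l := 0) ?_
  simpa [mul_sub] using (tendsto_sqrt_sub_sub_sqrt_atTop a).const_mul 2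

lemma integral_Ioi_rpow_neg_half_sub_sub {a : ℝ} (ha : 0 ≤ a) :
    ∫ x in Ioi a, ((x - a) ^ (-(1 / 2 : ℝ)) - x ^ (-(1 / 2 : ℝ))) = 2 * √a := by
  rw [integral_Ioi_of_hasDerivAt_of_nonneg (by fun_prop)
    (fun x hx => hasDerivAt_two_mul_sqrt_sub_sub ha hx)
    (fun x hx => sub_nonneg.2 (rpow_neg_half_le_rpow_neg_half_sub ha hx)) (l := 0)]
  · simp
  · simpa [mul_sub] using (tendsto_sqrt_sub_sub_sqrt_atTop a).const_mul 2

end Real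

lemma K_eq (s t : ℝ) :
    K s t = 1 / √π * ((s - t) ^ (-(1 / 2 : ℝ)) - s ^ (-(1 / 2 : ℝ))) := by
  have h₁ : (if t < s then (s - t) ^ (-(1 / 2 : ℝ)) else 0) = (s - t) ^ (-(1 / 2 : ℝ)) := by
    split_ifs with h
    · rfl
    · exact (rpow_neg_half_of_nonpos (by linarith)).symm
  have h₂ : (if 0 < s then s ^ (-(1 / 2 : ℝ)) else 0) = s ^ (-(1 / 2 : ℝ)) := by
    split_ifs with h
    · rfl
    · exact (rpow_neg_half_of_nonpos (not_lt.1 h)).symm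
  rw [K, h₁, h₂, mul_sub]

lemma abs_K_of_le {s t : ℝ} (hst : s ≤ t) : |K s t| = 1 / √π * s ^ (-(1 / 2 : ℝ)) := by
  rw [K_eq, rpow_neg_half_of_nonpos (sub_nonpos.2 hst), zero_sub, mul_neg, abs_neg,
    abs_of_nonneg (mul_nonneg (by positivity) (rpow_neg_half_nonneg s))]

lemma abs_K_of_lt {s t : ℝ} (ht : 0 ≤ t) (hts : t < s) :
    |K s t| = 1 / √π * ((s - t) ^ (-(1 / 2 : ℝ)) - s ^ (-(1 / 2 : ℝ))) := by
  rw [K_eq, abs_of_nonneg (mul_nonneg (by positivity)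
    (sub_nonneg.2 (rpow_neg_half_le_rpow_neg_half_sub ht hts)))]

/-- For every `t ≥ 0`, `∫_0^∞ |K(s,t)| ds = (4/√π) √t`. -/
theorem stmt_2 (t : ℝ) (ht : 0 ≤ t) :
    ∫ s in Set.Ioi (0 : ℝ), |K s t| = (4 / Real.sqrt Real.pi) * Real.sqrt t := by
  have h₁ : EqOn (fun s => |K s t|) (fun s => 1 / √π * s ^ (-(1 / 2 : ℝ))) (Ioc 0 t) :=
    fun s hs => abs_K_of_le hs.2
  have h₂ : EqOn (fun s => |K s t|)
      (fun s => 1 / √π * ((s - t) ^ (-(1 / 2 : ℝ)) - s ^ (-(1 / 2 : ℝ)))) (Ioi t) :=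
    fun s hs => abs_K_of_lt ht hs
  rw [← Ioc_union_Ioi_eq_Ioi ht, setIntegral_union (Ioc_disjoint_Ioi le_rfl) measurableSet_Ioi
      (IntegrableOn.congr_fun ((integrableOn_Ioc_rpow_neg_half t).const_mul _) h₁.symm
        measurableSet_Ioc)
      (IntegrableOn.congr_fun ((integrableOn_Ioi_rpow_neg_half_sub_sub ht).const_mul _) h₂.symm
        measurableSet_Ioi),
    setIntegral_congr_fun measurableSet_Ioc h₁, setIntegral_congr_fun measurableSet_Ioi h₂,
    integral_const_mul, integral_const_mul, integral_Ioc_rpow_neg_half ht,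
    integral_Ioi_rpow_neg_half_sub_sub ht]
  ring
end

section
/- Let H be a Hilbert space and A : H → H a bounded self-adjoint operator with A ≥ 0, and let √A denote its positive self-adjoint square root. Then for every v ∈ H and every t ≥ 0, ‖exp(−tA) v − v‖ ≤ (4/√π) √t · ‖√A v‖. -/
/-!
Along the semigroup `E s = exp (-s A)` we have `d/ds ‖E s w‖² = -2 ⟪A E s w, E s w⟫ ≤ 0`, so each
`E s` with `s ≥ 0` is a contraction. Since `d/ds ⟪v - E s v, v⟫ = ⟪E s (√A v), √A v⟫` is bounded by
`‖√A v‖²`, the mean value theorem gives `⟪v - E t v, v⟫ ≤ t ‖√A v‖²`, and for `‖u‖ ≤ ‖v‖` one has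
`‖u - v‖² ≤ 2 ⟪v - u, v⟫`. Hence `‖E t v - v‖ ≤ √(2t) ‖√A v‖`, and `√2 ≤ 4 / √π` because `π ≤ 8`.
-/

open NormedSpace RealInnerProductSpace

theorem hasDerivAt_exp_neg_smul_apply {E : Type*} [NormedAddCommGroup E] [NormedSpace ℝ E]
    [CompleteSpace E] (A : E →L[ℝ] E) (w : E) (s : ℝ) :
    HasDerivAt (fun u : ℝ => exp (-(u • A)) w) (-exp (-(s • A)) (A w)) s := by
  simp_rw [← smul_neg]
  simpa using (hasDerivAt_exp_smul_const (-A) s).clm_apply (hasDerivAt_const s w)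

theorem Commute.exp_neg_smul_right {𝔸 : Type*} [NormedRing 𝔸] [NormedAlgebra ℝ 𝔸]
    {a b : 𝔸} (h : Commute b a) (s : ℝ) :
    Commute b (NormedSpace.exp (-(s • a))) :=
  (h.smul_right s).neg_right.exp_right

theorem norm_sub_sq_le_two_mul_inner_sub_self {F : Type*} [NormedAddCommGroup F]
    [InnerProductSpace ℝ F] {u v : F} (h : ‖u‖ ≤ ‖v‖) :
    ‖u - v‖ ^ 2 ≤ 2 * ⟪v - u, v⟫ := by
  rw [norm_sub_sq_real, inner_sub_left, real_inner_self_eq_norm_sq, real_inner_comm]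
  nlinarith [norm_nonneg u]

theorem Real.sqrt_two_le_four_div_sqrt_pi : √2 ≤ 4 / √Real.pi := by
  rw [le_div_iff₀ (Real.sqrt_pos.2 Real.pi_pos), ← Real.sqrt_mul zero_le_two,
    Real.sqrt_le_left zero_le_four]
  nlinarith [Real.pi_le_four]

namespace ContinuousLinearMap

variable {H : Type*} [NormedAddCommGroup H] [InnerProductSpace ℝ H] [CompleteSpace H]
  {A : H →L[ℝ] H}

theorem IsPositive.norm_exp_neg_smul_apply_le (hA : A.IsPositive) {s : ℝ} (hs : 0 ≤ s) (w : H) :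
    ‖exp (-(s • A)) w‖ ≤ ‖w‖ := by
  have hderiv (u : ℝ) : HasDerivAt (fun u => ‖exp (-(u • A)) w‖ ^ 2)
      (-(2 * ⟪A (exp (-(u • A)) w), exp (-(u • A)) w⟫)) u := by
    have hcomm : exp (-(u • A)) (A w) = A (exp (-(u • A)) w) :=
      (DFunLike.congr_fun ((Commute.refl A).exp_neg_smul_right u).eq w).symm
    convert (hasDerivAt_exp_neg_smul_apply A w u).norm_sq using 1
    rw [hcomm, inner_neg_right, real_inner_comm]
    ring
  have hanti := antitone_of_hasDerivAt_nonpos hderiv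
    fun u => neg_nonpos.2 (mul_nonneg zero_le_two (hA.inner_nonneg_left _))
  have hsq : ‖exp (-(s • A)) w‖ ^ 2 ≤ ‖w‖ ^ 2 := by simpa using hanti hs
  exact le_of_pow_le_pow_left₀ two_ne_zero (norm_nonneg w) hsq

theorem IsPositive.inner_sub_exp_neg_smul_apply_le (hA : A.IsPositive) {B : H →L[ℝ] H}
    (hB : B.IsSymmetric) (hBA : B * B = A) (v : H) {t : ℝ} (ht : 0 ≤ t) :
    ⟪v - exp (-(t • A)) v, v⟫ ≤ t * ‖B v‖ ^ 2 := by
  set g : ℝ → ℝ := fun s => ⟪v - exp (-(s • A)) v, v⟫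
  have hderiv (s : ℝ) : HasDerivAt g ⟪exp (-(s • A)) (A v), v⟫ s := by
    simpa using ((hasDerivAt_const s v).sub (hasDerivAt_exp_neg_smul_apply A v s)).inner ℝ
      (hasDerivAt_const s v)
  have hbound (s : ℝ) (hs : s ∈ Set.Ico 0 t) : ‖⟪exp (-(s • A)) (A v), v⟫‖ ≤ ‖B v‖ ^ 2 := by
    have hcomm : Commute B (exp (-(s • A))) :=
      (hBA ▸ (Commute.refl B).mul_right (Commute.refl B)).exp_neg_smul_right s
    have hsplit : exp (-(s • A)) (A v) = B (exp (-(s • A)) (B v)) := by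
      rw [show A v = B (B v) by rw [← hBA]; rfl]
      exact (DFunLike.congr_fun hcomm.eq (B v)).symm
    rw [hsplit, show ⟪B _, v⟫ = _ from hB _ v, Real.norm_eq_abs, sq]
    calc |⟪exp (-(s • A)) (B v), B v⟫| ≤ ‖exp (-(s • A)) (B v)‖ * ‖B v‖ :=
          abs_real_inner_le_norm _ _
      _ ≤ ‖B v‖ * ‖B v‖ := by gcongr; exact hA.norm_exp_neg_smul_apply_le hs.1 _
  have hmvt := norm_image_sub_le_of_norm_deriv_le_segment'
    (fun s _ => (hderiv s).hasDerivWithinAt) hbound t (Set.right_mem_Icc.2 ht)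
  have hg0 : g 0 = 0 := by simp [g]
  rw [hg0, sub_zero, sub_zero, Real.norm_eq_abs, mul_comm] at hmvt
  exact (le_abs_self _).trans hmvt

end ContinuousLinearMap

/-- Proposition 2.3 of the paper for a bounded positive self-adjoint generator: if `A ≥ 0` is a
bounded self-adjoint operator on a Hilbert space `H` with positive self-adjoint square root
`sqrtA`, then for all `v ∈ H` and `t ≥ 0`,
`‖exp(−tA) v − v‖ ≤ (4/√π) √t ‖√A v‖`. -/
theorem stmt_4 {H : Type*} [NormedAddCommGroup H] [InnerProductSpace ℝ H] [CompleteSpace H]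
    (A sqrtA : H →L[ℝ] H) (hA : A.IsPositive) (hsqrtA : sqrtA.IsPositive)
    (hsq : sqrtA * sqrtA = A) (v : H) (t : ℝ) (ht : 0 ≤ t) :
    ‖(NormedSpace.exp (-(t • A))) v - v‖
      ≤ (4 / Real.sqrt Real.pi) * Real.sqrt t * ‖sqrtA v‖ := by
  have hsq_le : ‖exp (-(t • A)) v - v‖ ^ 2 ≤ (√2 * √t * ‖sqrtA v‖) ^ 2 :=
    calc ‖exp (-(t • A)) v - v‖ ^ 2 ≤ 2 * ⟪v - exp (-(t • A)) v, v⟫ :=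
          norm_sub_sq_le_two_mul_inner_sub_self (hA.norm_exp_neg_smul_apply_le ht v)
      _ ≤ 2 * (t * ‖sqrtA v‖ ^ 2) := by
          gcongr; exact hA.inner_sub_exp_neg_smul_apply_le hsqrtA.isSymmetric hsq v ht
      _ = (√2 * √t * ‖sqrtA v‖) ^ 2 := by
          rw [mul_pow, mul_pow, Real.sq_sqrt zero_le_two, Real.sq_sqrt ht]; ring
  calc ‖exp (-(t • A)) v - v‖ ≤ √2 * √t * ‖sqrtA v‖ :=
        le_of_pow_le_pow_left₀ two_ne_zero (by positivity) hsq_le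
    _ ≤ 4 / √Real.pi * √t * ‖sqrtA v‖ := by gcongr; exact Real.sqrt_two_le_four_div_sqrt_pi
end

section
/- Let Q be a symmetric positive-definite n×n real matrix and A := −Q⁻¹/2. For every t > 0, the matrix Γ_t := Q^{−1/2} (I − exp(2tA))^{−1/2} exp(tA) satisfies the operator norm bound ‖Γ_t‖ ≤ 1/√t, i.e. |Γ_t x| ≤ |x|/√t for every x ∈ ℝⁿ. -/
/-!
Every matrix in sight is a function of `Q` under the functional calculus: `Q⁻¹` and the
exponentials directly, and `R`, `S` by uniqueness of positive semidefinite square roots. Hence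
`Γ_t = g(Q)` with `g(λ) = λ^{-1/2} (1 - e^{-t/λ})^{-1/2} e^{-t/(2λ)}`, whose operator norm is the
maximum of `|g|` on the (positive) spectrum. Finally `g(λ)² ≤ 1/t` is, with `s = t/λ`, the
inequality `s e^{-s} ≤ 1 - e^{-s}`, i.e. `1 + s ≤ e^s`.
-/

open scoped MatrixOrder ComplexOrder

lemma CFC.normedSpace_exp_cfc {A : Type*} [NormedRing A] [StarRing A] [NormedAlgebra ℝ A]
    [ContinuousFunctionalCalculus ℝ A IsSelfAdjoint] [ContinuousMap.UniqueHom ℝ A]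
    (f : ℝ → ℝ) (a : A) (hf : ContinuousOn f (spectrum ℝ a) := by cfc_cont_tac)
    (ha : IsSelfAdjoint a := by cfc_tac) :
    NormedSpace.exp (cfc f a) = cfc (fun x => Real.exp (f x)) a := by
  rw [← CFC.real_exp_eq_normedSpace_exp, ← cfc_comp' Real.exp f a]

namespace Matrix

variable {𝕜 ι : Type*} [RCLike 𝕜] [Fintype ι] [DecidableEq ι]

-- The spectrum is finite, so this discharges every continuity side goal of `cfc_cont_tac`.
@[fun_prop]
lemma continuousOn_spectrum_real (f : ℝ → ℝ) (A : Matrix ι ι 𝕜) :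
    ContinuousOn f (spectrum ℝ A) :=
  finite_real_spectrum.continuousOn f

lemma inv_cfc {f : ℝ → ℝ} {A : Matrix ι ι 𝕜} (hf : ∀ x ∈ spectrum ℝ A, f x ≠ 0)
    (hA : IsSelfAdjoint A := by cfc_tac) :
    (cfc f A)⁻¹ = cfc (fun x => (f x)⁻¹) A := by
  refine inv_eq_left_inv ?_
  rw [← cfc_mul, ← cfc_one ℝ A]
  exact cfc_congr fun x hx => inv_mul_cancel₀ (hf x hx)

lemma eq_cfc_sqrt_of_mul_self_eq {f : ℝ → ℝ} {A S : Matrix ι ι 𝕜} (hS : S.PosSemidef)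
    (hf : ∀ x ∈ spectrum ℝ A, 0 ≤ f x) (hSA : S * S = cfc f A) :
    S = cfc (fun x => √(f x)) A := by
  refine (CFC.mul_self_eq_mul_self_iff S _ hS.nonneg
    (cfc_nonneg fun x _ => Real.sqrt_nonneg _)).mp ?_
  rw [hSA, ← cfc_mul]
  exact cfc_congr fun x hx => (Real.mul_self_sqrt (hf x hx)).symm

lemma PosDef.exp_smul_inv_eq_cfc {Q : Matrix ι ι ℝ} (hQ : Q.PosDef) (c : ℝ) :
    NormedSpace.exp (c • Q⁻¹) = cfc (fun x => Real.exp (c * x⁻¹)) Q := by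
  have hinv : Q⁻¹ = cfc (fun x : ℝ => x⁻¹) Q := by
    conv_lhs => rw [← cfc_id' ℝ Q]
    exact inv_cfc fun x hx => (hQ.isStrictlyPositive.spectrum_pos hx).ne'
  rw [hinv, ← cfc_const_mul]
  open scoped Matrix.Norms.L2Operator in
  exact CFC.normedSpace_exp_cfc (fun x => c * x⁻¹) Q

lemma norm_toEuclideanLin_cfc_le {f : ℝ → ℝ} {A : Matrix ι ι ℝ} {c : ℝ} (hc : 0 ≤ c)
    (hf : ∀ x ∈ spectrum ℝ A, |f x| ≤ c) (v : EuclideanSpace ℝ ι) :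
    ‖toEuclideanLin (cfc f A) v‖ ≤ c * ‖v‖ := by
  open scoped Matrix.Norms.L2Operator in
  calc ‖toEuclideanLin (cfc f A) v‖ ≤ ‖cfc f A‖ * ‖v‖ := l2_opNorm_mulVec _ v
    _ ≤ c * ‖v‖ := by
      gcongr
      exact norm_cfc_le hc hf

end Matrix

lemma mul_exp_neg_le_one_sub_exp_neg (s : ℝ) : s * Real.exp (-s) ≤ 1 - Real.exp (-s) := by
  have h := mul_le_mul_of_nonneg_right (Real.add_one_le_exp s) (Real.exp_pos (-s)).le
  rw [← Real.exp_add, add_neg_cancel, Real.exp_zero] at h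
  linarith

lemma inv_sqrt_mul_inv_sqrt_one_sub_exp_mul_exp_le {t x : ℝ} (ht : 0 < t) (hx : 0 < x) :
    (√x)⁻¹ * (√(1 - Real.exp (-t * x⁻¹)))⁻¹ * Real.exp (-t / 2 * x⁻¹) ≤ (√t)⁻¹ := by
  set e := Real.exp (-t * x⁻¹)
  have he : e < 1 := Real.exp_lt_one_iff.mpr (by have := mul_pos ht (inv_pos.mpr hx); linarith)
  have hkey : t * e ≤ x * (1 - e) := by
    have h := mul_exp_neg_le_one_sub_exp_neg (t * x⁻¹)
    rw [← neg_mul] at h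
    calc t * e = x * (t * x⁻¹ * e) := by field_simp
      _ ≤ x * (1 - e) := mul_le_mul_of_nonneg_left h hx.le
  have hhalf : Real.exp (-t / 2 * x⁻¹) = √e := by
    rw [← Real.exp_half]
    ring_nf
  rw [hhalf, ← Real.sqrt_inv, ← Real.sqrt_inv, ← Real.sqrt_inv, ← Real.sqrt_mul (by positivity),
    ← Real.sqrt_mul (by positivity)]
  gcongr
  rw [← mul_inv, inv_mul_eq_div, div_le_iff₀ (by nlinarith), ← div_eq_inv_mul, le_div_iff₀ ht]
  linarith

/-- The estimate `|Γ_t| ≤ 1/√t` used in the proof of Lemma 3.2 of the paper: with `Q` symmetric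
positive-definite, `A := −Q⁻¹/2`, and `R`, `S` the (unique) positive-definite square roots of
`Q` and `I − exp(2tA)` respectively, the matrix `Γ_t := Q^{−1/2}(I − exp(2tA))^{−1/2} exp(tA)
= R⁻¹ S⁻¹ exp(tA)` satisfies `|Γ_t x| ≤ |x|/√t` for every `x ∈ ℝⁿ`. -/
theorem stmt_10 (n : ℕ) (Q : Matrix (Fin n) (Fin n) ℝ) (hQ : Q.PosDef) (t : ℝ) (ht : 0 < t)
    (R S : Matrix (Fin n) (Fin n) ℝ) (hR : R.PosDef) (hRQ : R * R = Q)
    (hS : S.PosDef)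
    (hSe : S * S = 1 - NormedSpace.exp ((2 * t) • (-(2 : ℝ)⁻¹ • Q⁻¹)))
    (x : EuclideanSpace ℝ (Fin n)) :
    ‖Matrix.toEuclideanLin
        (R⁻¹ * S⁻¹ * NormedSpace.exp (t • (-(2 : ℝ)⁻¹ • Q⁻¹))) x‖
      ≤ ‖x‖ / Real.sqrt t := by
  have hQsa : IsSelfAdjoint Q := hQ.isHermitian
  have hspec : ∀ y ∈ spectrum ℝ Q, 0 < y := fun _ => hQ.isStrictlyPositive.spectrum_pos
  have hexp_lt_one : ∀ y ∈ spectrum ℝ Q, Real.exp (-t * y⁻¹) < 1 := fun y hy =>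
    Real.exp_lt_one_iff.mpr (by have := mul_pos ht (inv_pos.mpr (hspec y hy)); linarith)
  have hR_eq : R = cfc (fun y => √y) Q :=
    Matrix.eq_cfc_sqrt_of_mul_self_eq hR.posSemidef (fun y hy => (hspec y hy).le)
      (by rw [hRQ, cfc_id' ℝ Q])
  have hS_eq : S = cfc (fun y => √(1 - Real.exp (-t * y⁻¹))) Q := by
    refine Matrix.eq_cfc_sqrt_of_mul_self_eq hS.posSemidef
      (fun y hy => sub_nonneg.mpr (hexp_lt_one y hy).le) ?_
    rw [hSe, smul_smul, show 2 * t * -(2 : ℝ)⁻¹ = -t by ring, hQ.exp_smul_inv_eq_cfc, cfc_sub,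
      cfc_const_one ℝ Q]
  have hΓ : R⁻¹ * S⁻¹ * NormedSpace.exp (t • (-(2 : ℝ)⁻¹ • Q⁻¹)) =
      cfc (fun y => (√y)⁻¹ * (√(1 - Real.exp (-t * y⁻¹)))⁻¹ * Real.exp (-t / 2 * y⁻¹)) Q := by
    rw [hR_eq, hS_eq, Matrix.inv_cfc, Matrix.inv_cfc, smul_smul,
      show t * -(2 : ℝ)⁻¹ = -t / 2 by ring, hQ.exp_smul_inv_eq_cfc, cfc_mul, cfc_mul]
    · exact fun y hy => (Real.sqrt_pos.mpr (sub_pos.mpr (hexp_lt_one y hy))).ne'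
    · exact fun y hy => (Real.sqrt_pos.mpr (hspec y hy)).ne'
  rw [hΓ, div_eq_inv_mul ‖x‖]
  refine Matrix.norm_toEuclideanLin_cfc_le (by positivity) (fun y hy => ?_) x
  rw [abs_of_nonneg (by positivity)]
  exact inv_sqrt_mul_inv_sqrt_one_sub_exp_mul_exp_le ht (hspec y hy)
end

section
/- Quantitative stability of regular Lagrangian flows: let H be a separable real Hilbert space, m a finite Borel measure on H, T > 0, and let b, b̄ : [0,T] × H → H be Borel vector fields with ∫₀ᵀ ∫_H (|b_t| + |b̄_t|) dm dt < ∞. Let X be a regular Lagrangian flow of b with compressibility constant L, and X̄ a regular Lagrangian flow of b̄ with compressibility constant L̄. Assume there exists a Borel function g : [0,T] × H → [0, ∞) such that G := ∫₀ᵀ ∫_H g_t dm dt < ∞ and, for a.e. t ∈ (0,T) and all x, y ∈ H, |b_t(x) − b_t(y)| ≤ |x − y| · (g_t(x) + g_t(y)). If δ := ∫₀ᵀ ∫_H |b_t − b̄_t| dm dt satisfies 0 < δ < 1, then for every t ∈ [0,T], ∫_H min(|X(t,x) − X̄(t,x)|, 1) dm(x) ≤ (2(L + L̄) G + 2 L̄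 + 1) / |log δ|. -/
open MeasureTheory Real

/-- A regular Lagrangian flow `X` of the Borel vector field `b : [0,T] × H → H`, with
compressibility constant `L`: for `m`-a.e. `x` the curve `t ↦ X(t,x)` is an integral curve of
`b` starting at `x`, and the pushforward of `m` under `X(t,·)` is bounded by `L·m`. -/
def IsRegularLagrangianFlow {H : Type*} [NormedAddCommGroup H] [InnerProductSpace ℝ H]
    [MeasurableSpace H] (m : Measure H) (T : ℝ) (b : ℝ → H → H) (L : ℝ)
    (X : ℝ → H → H) : Prop :=
  (∀ t ∈ Set.Icc 0 T, AEMeasurable (X t) m) ∧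
    (∀ᵐ x ∂m, IntegrableOn (fun s => b s (X s x)) (Set.Ioc 0 T) ∧
      ∀ t ∈ Set.Icc 0 T, X t x = x + ∫ s in Set.Ioc 0 t, b s (X s x)) ∧
    (∀ t ∈ Set.Icc 0 T, Measure.map (X t) m ≤ ENNReal.ofReal L • m)

/-! For a.e. `x`, `Z s = X s x - X̄ s x` is the primitive of
`w s = b s (X s x) - b̄ s (X̄ s x)`. Since `log (δ + ∫₀ˢ ‖w‖)` is absolutely continuous, the
fundamental theorem of calculus gives
`min ‖Z t‖ 1 · |log δ| ≤ log (δ + ‖Z t‖) - log δ ≤ ∫₀ᵗ ‖w‖ / (δ + ‖Z‖)`.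
Splitting `w s` at `b s (X̄ s x)`, the Lusin–Lipschitz bound turns the integrand into
`g s (X s x) + g s (X̄ s x) + ‖b - b̄‖ (s, X̄ s x) / δ`, and integrating in `x` against the
compressibility bounds of both flows gives `L G + L̄ (G + 1)`, which is below the stated
constant. -/

open Set Filter
open scoped ENNReal NNReal

theorem LipschitzOnWith.comp_absolutelyContinuousOnInterval {X Y : Type*} [PseudoMetricSpace X]
    [PseudoMetricSpace Y] {φ : X → Y} {K : ℝ≥0} {s : Set X} {f : ℝ → X} {a b : ℝ}
    (hφ : LipschitzOnWith K φ s) (hf : AbsolutelyContinuousOnInterval f a b)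
    (hfs : MapsTo f (uIcc a b) s) : AbsolutelyContinuousOnInterval (φ ∘ f) a b := by
  rw [absolutelyContinuousOnInterval_iff] at hf ⊢
  intro ε hε
  obtain ⟨η, hη, hfη⟩ := hf (ε / (K + 1)) (by positivity)
  refine ⟨η, hη, fun E hE hlen => ?_⟩
  calc ∑ i ∈ Finset.range E.1, dist ((φ ∘ f) (E.2 i).1) ((φ ∘ f) (E.2 i).2)
      ≤ ∑ i ∈ Finset.range E.1, K * dist (f (E.2 i).1) (f (E.2 i).2) :=
        Finset.sum_le_sum fun i hi =>
          hφ.dist_le_mul _ (hfs (hE.1 i hi).1) _ (hfs (hE.1 i hi).2)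
    _ = K * ∑ i ∈ Finset.range E.1, dist (f (E.2 i).1) (f (E.2 i).2) := (Finset.mul_sum ..).symm
    _ ≤ K * (ε / (K + 1)) := by gcongr; exact (hfη E hE hlen).le
    _ < ε := by
        rw [mul_div_assoc', div_lt_iff₀ (by positivity)]
        nlinarith

theorem lipschitzOnWith_log_add {δ : ℝ} (hδ : 0 < δ) :
    LipschitzOnWith δ⁻¹.toNNReal (fun v => log (δ + v)) (Ici 0) := by
  refine Convex.lipschitzOnWith_of_nnnorm_hasDerivWithin_le (convex_Ici 0)
    (fun v hv => (((hasDerivAt_id v).const_add δ).log ?_).hasDerivWithinAt) fun v hv => ?_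
  · exact (add_pos_of_pos_of_nonneg hδ hv).ne'
  · rw [← NNReal.coe_le_coe, coe_nnnorm, Real.coe_toNNReal _ (inv_nonneg.2 hδ.le), id,
      Real.norm_eq_abs, abs_of_nonneg (one_div_nonneg.2 (add_nonneg hδ.le hv)), one_div]
    exact inv_anti₀ hδ (le_add_of_nonneg_right hv)

theorem ofReal_log_add_intervalIntegral_sub_log {u : ℝ → ℝ} {δ t : ℝ} (hδ : 0 < δ)
    (ht : 0 ≤ t) (hu0 : ∀ s, 0 ≤ u s) (hu : IntervalIntegrable u volume 0 t) :
    ENNReal.ofReal (log (δ + ∫ s in 0..t, u s) - log δ)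
      = ∫⁻ s in Ioc 0 t, ENNReal.ofReal (u s / (δ + ∫ σ in 0..s, u σ)) := by
  set U : ℝ → ℝ := fun s => ∫ σ in 0..s, u σ
  have hU0 : MapsTo U (uIcc 0 t) (Ici 0) := fun s hs =>
    intervalIntegral.integral_nonneg (uIcc_of_le ht ▸ hs).1 fun σ _ => hu0 σ
  have hlogU : AbsolutelyContinuousOnInterval (fun s => log (δ + U s)) 0 t :=
    (lipschitzOnWith_log_add hδ).comp_absolutelyContinuousOnInterval
      (hu.absolutelyContinuousOnInterval_intervalIntegral (by simp)) hU0
  have hderiv : ∀ᵐ s, s ∈ uIoc 0 t → deriv (fun s => log (δ + U s)) s = u s / (δ + U s) := by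
    filter_upwards [hu.ae_hasDerivAt_integral] with s hs hst
    have hsI := uIoc_subset_uIcc hst
    exact (((hs hsI 0 (by simp)).const_add δ).log
      (add_pos_of_pos_of_nonneg hδ (hU0 hsI)).ne').deriv
  have hint : IntervalIntegrable (fun s => u s / (δ + U s)) volume 0 t :=
    hlogU.intervalIntegrable_deriv.congr_ae ((ae_restrict_iff' measurableSet_uIoc).2 hderiv)
  have hftc := hlogU.integral_deriv_eq_sub
  rw [intervalIntegral.integral_congr_ae hderiv] at hftc
  simp only [U, intervalIntegral.integral_same, add_zero] at hftc
  rw [← hftc, intervalIntegral.integral_of_le ht]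
  refine ofReal_integral_eq_lintegral_ofReal hint.1 ?_
  filter_upwards [ae_restrict_mem measurableSet_Ioc] with s hs
  have hsI : s ∈ uIcc 0 t := by rw [uIcc_of_le ht]; exact Ioc_subset_Icc_self hs
  exact div_nonneg (hu0 s) (add_pos_of_pos_of_nonneg hδ (hU0 hsI)).le

theorem ofReal_log_add_norm_intervalIntegral_sub_log_le {E : Type*} [NormedAddCommGroup E]
    [NormedSpace ℝ E] {w : ℝ → E} {δ t : ℝ} (hδ : 0 < δ) (ht : 0 ≤ t)
    (hw : IntervalIntegrable w volume 0 t) :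
    ENNReal.ofReal (log (δ + ‖∫ s in 0..t, w s‖) - log δ)
      ≤ ∫⁻ s in Ioc 0 t, ENNReal.ofReal (‖w s‖ / (δ + ‖∫ σ in 0..s, w σ‖)) := by
  calc ENNReal.ofReal (log (δ + ‖∫ s in 0..t, w s‖) - log δ)
      ≤ ENNReal.ofReal (log (δ + ∫ s in 0..t, ‖w s‖) - log δ) := by
        gcongr
        exact intervalIntegral.norm_integral_le_integral_norm ht
    _ = ∫⁻ s in Ioc 0 t, ENNReal.ofReal (‖w s‖ / (δ + ∫ σ in 0..s, ‖w σ‖)) :=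
        ofReal_log_add_intervalIntegral_sub_log hδ ht (fun s => norm_nonneg _) hw.norm
    _ ≤ ∫⁻ s in Ioc 0 t, ENNReal.ofReal (‖w s‖ / (δ + ‖∫ σ in 0..s, w σ‖)) := by
        refine setLIntegral_mono' measurableSet_Ioc fun s hs => ?_
        gcongr
        exact intervalIntegral.norm_integral_le_integral_norm hs.1.le

theorem min_mul_neg_log_le {r δ : ℝ} (hδ0 : 0 < δ) (hδ1 : δ < 1) (hr : 0 ≤ r) :
    min r 1 * -log δ ≤ log (δ + r) - log δ := by
  rcases le_or_gt 1 r with h1 | h1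
  · rw [min_eq_right h1]
    linarith [log_nonneg (by linarith : 1 ≤ δ + r)]
  · rw [min_eq_left h1.le]
    have hconc := strictConcaveOn_log_Ioi.concaveOn.2 (mem_Ioi.2 hδ0)
      (mem_Ioi.2 (by linarith : 0 < δ + 1)) (by linarith : 0 ≤ 1 - r) hr (by ring)
    simp only [smul_eq_mul, show (1 - r) * δ + r * (δ + 1) = δ + r by ring] at hconc
    nlinarith [log_nonneg (by linarith : 1 ≤ δ + 1)]

theorem norm_sub_div_add_norm_sub_le {E F : Type*} [SeminormedAddCommGroup E]
    [SeminormedAddCommGroup F] {f f' : E → F} {g : E → ℝ} {δ : ℝ} (hδ : 0 < δ)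
    (hg : ∀ y, 0 ≤ g y) (hf : ∀ y z, ‖f y - f z‖ ≤ ‖y - z‖ * (g y + g z)) (y z : E) :
    ‖f y - f' z‖ / (δ + ‖y - z‖) ≤ g y + g z + ‖f z - f' z‖ / δ := by
  have hyz := norm_nonneg (y - z)
  have hsplit : ‖f y - f' z‖ ≤ ‖y - z‖ * (g y + g z) + ‖f z - f' z‖ :=
    (norm_sub_le_norm_sub_add_norm_sub _ (f z) _).trans (add_le_add_left (hf y z) _)
  have hdiv : ‖f z - f' z‖ / δ * δ = ‖f z - f' z‖ := div_mul_cancel₀ _ hδ.ne'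
  rw [div_le_iff₀ (by positivity)]
  nlinarith [mul_nonneg (add_nonneg (hg y) (hg z)) hδ.le,
    mul_nonneg (div_nonneg (norm_nonneg (f z - f' z)) hδ.le) hyz]

theorem aemeasurable_uncurry_of_continuousOn {ι α β : Type*} [PseudoMetricSpace ι]
    [MeasurableSpace ι] [OpensMeasurableSpace ι] [MeasurableSpace α] [TopologicalSpace β]
    [TopologicalSpace.PseudoMetrizableSpace β] [MeasurableSpace β] [BorelSpace β]
    {ν : Measure ι} {μ : Measure α} [SFinite μ] {u : ι → α → β} {s : Set ι}
    [TopologicalSpace.SeparableSpace s]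
    (hs : MeasurableSet s) (hmeas : ∀ c ∈ s, AEMeasurable (u c) μ)
    (hcont : ∀ᵐ x ∂μ, ContinuousOn (fun c => u c x) s) :
    AEMeasurable (Function.uncurry u) ((ν.restrict s).prod μ) := by
  classical
  rcases s.eq_empty_or_nonempty with rfl | ⟨c₀, hc₀⟩
  · simp
  -- `τ n` takes finitely many values in `s`, so `u (τ n ·)` needs only finitely many
  -- measurable modifications; continuity in time gives the limit.
  let τ : ℕ → SimpleFunc ι ι := SimpleFunc.approxOn id measurable_id s c₀ hc₀
  have hτs : ∀ n t, τ n t ∈ s := SimpleFunc.approxOn_mem measurable_id hc₀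
  let v : ι → α → β := fun c =>
    if hc : c ∈ s then (hmeas c hc).mk (u c) else (hmeas c₀ hc₀).mk (u c₀)
  have hv_meas : ∀ c, Measurable (v c) := fun c => by
    by_cases hc : c ∈ s
    · simpa only [v, dif_pos hc] using (hmeas c hc).measurable_mk
    · simpa only [v, dif_neg hc] using (hmeas c₀ hc₀).measurable_mk
  have hv_eq : ∀ c ∈ s, u c =ᵐ[μ] v c := fun c hc => by
    simpa only [v, dif_pos hc] using (hmeas c hc).ae_eq_mk
  refine aemeasurable_of_tendsto_metrizable_ae' (f := fun n p => u (τ n p.1) p.2)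
    (fun n => ?_) ?_
  · have hv_eq_range : ∀ᵐ x ∂μ, ∀ c ∈ (τ n).range, u c x = v c x :=
      (Finset.eventually_all _).2 fun c hc => hv_eq c <| by
        obtain ⟨t, rfl⟩ := SimpleFunc.mem_range.1 hc; exact hτs n t
    refine ⟨fun p => v (τ n p.1) p.2, ?_, ?_⟩
    · exact ((τ n).comp Prod.fst measurable_fst).measurable_bind (fun c p => v c p.2)
        fun c => (hv_meas c).comp measurable_snd
    · filter_upwards [Measure.quasiMeasurePreserving_snd.ae hv_eq_range] with p hp
      exact hp _ (SimpleFunc.mem_range_self _ _)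
  · filter_upwards [Measure.quasiMeasurePreserving_fst.ae (ae_restrict_mem hs),
      Measure.quasiMeasurePreserving_snd.ae hcont] with p hp₁ hp₂
    exact (hp₂ p.1 hp₁).tendsto.comp <| tendsto_nhdsWithin_iff.2
      ⟨SimpleFunc.tendsto_approxOn measurable_id hc₀ (subset_closure hp₁),
        Eventually.of_forall fun n => hτs n p.1⟩

theorem lintegral_comp_le_of_map_le_smul {α β : Type*} [MeasurableSpace α] [MeasurableSpace β]
    {μ : Measure α} {ν : Measure β} {Y : α → β} {c : ℝ≥0∞} (hY : AEMeasurable Y μ)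
    (hmap : μ.map Y ≤ c • ν) {f : β → ℝ≥0∞} (hf : Measurable f) :
    ∫⁻ x, f (Y x) ∂μ ≤ c * ∫⁻ y, f y ∂ν := by
  rw [← lintegral_map' hf.aemeasurable hY]
  exact (lintegral_mono' hmap le_rfl).trans_eq (lintegral_smul_measure c f)

theorem integral_le_of_lintegral_ofReal_le {α : Type*} [MeasurableSpace α] {μ : Measure α}
    {f : α → ℝ} {c : ℝ} (hf : AEStronglyMeasurable f μ) (hf0 : 0 ≤ᵐ[μ] f) (hc : 0 ≤ c)
    (h : ∫⁻ x, ENNReal.ofReal (f x) ∂μ ≤ ENNReal.ofReal c) : ∫ x, f x ∂μ ≤ c := by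
  rw [integral_eq_lintegral_of_nonneg_ae hf0 hf]
  exact ENNReal.toReal_le_of_le_ofReal hc h

namespace IsRegularLagrangianFlow

variable {H : Type*} [NormedAddCommGroup H] [InnerProductSpace ℝ H] [MeasurableSpace H]
  {m : Measure H} {T L : ℝ} {b X : ℝ → H → H}

theorem one_le [IsFiniteMeasure m] (hX : IsRegularLagrangianFlow m T b L X) (hT : 0 ≤ T)
    (hm : m ≠ 0) : 1 ≤ L := by
  have h0 : (0 : ℝ) ∈ Icc 0 T := ⟨le_rfl, hT⟩
  have huniv := Measure.le_iff'.1 (hX.2.2 0 h0) univ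
  rw [Measure.map_apply_of_aemeasurable (hX.1 0 h0) MeasurableSet.univ, preimage_univ,
    Measure.smul_apply, smul_eq_mul] at huniv
  refine ENNReal.one_le_ofReal.1 <| (ENNReal.mul_le_mul_iff_left
    (Measure.measure_univ_ne_zero.2 hm) (measure_ne_top m univ)).1 ?_
  rwa [one_mul]

theorem ae_continuousOn (hX : IsRegularLagrangianFlow m T b L X) :
    ∀ᵐ x ∂m, ContinuousOn (fun t => X t x) (Icc 0 T) := by
  filter_upwards [hX.2.1] with x hx
  refine (continuousOn_const.add (intervalIntegral.continuousOn_primitive ?_)).congr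
    fun t ht => hx.2 t ht
  exact (integrableOn_Icc_iff_integrableOn_Ioc).2 hx.1

theorem ae_ofReal_min_mul_neg_log_le (hX : IsRegularLagrangianFlow m T b L X)
    {bbar Xbar : ℝ → H → H} {Lbar : ℝ} (hXbar : IsRegularLagrangianFlow m T bbar Lbar Xbar)
    {g : ℝ → H → ℝ} (hg : ∀ t x, 0 ≤ g t x)
    (hlip : ∀ᵐ t ∂(volume.restrict (Ioc 0 T)), ∀ x y, ‖b t x - b t y‖ ≤ ‖x - y‖ * (g t x + g t y))
    {δ : ℝ} (hδ0 : 0 < δ) (hδ1 : δ < 1) {t : ℝ} (ht : t ∈ Icc 0 T) :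
    ∀ᵐ x ∂m, ENNReal.ofReal (min ‖X t x - Xbar t x‖ 1 * -log δ)
      ≤ ∫⁻ s in Ioc 0 T, (ENNReal.ofReal (g s (X s x))
          + ENNReal.ofReal (g s (Xbar s x) + ‖b s (Xbar s x) - bbar s (Xbar s x)‖ / δ)) := by
  filter_upwards [hX.2.1, hXbar.2.1] with x hx hxbar
  set w : ℝ → H := fun s => b s (X s x) - bbar s (Xbar s x)
  have hw : IntegrableOn w (Ioc 0 T) := hx.1.sub hxbar.1
  have hZ : ∀ s ∈ Icc 0 T, X s x - Xbar s x = ∫ σ in 0..s, w σ := fun s hs => by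
    have hsub : Ioc 0 s ⊆ Ioc 0 T := Ioc_subset_Ioc_right hs.2
    rw [hx.2 s hs, hxbar.2 s hs, add_sub_add_left_eq_sub, intervalIntegral.integral_of_le hs.1,
      integral_sub (hx.1.mono_set hsub) (hxbar.1.mono_set hsub)]
  have hwt : IntervalIntegrable w volume 0 t :=
    (intervalIntegrable_iff_integrableOn_Ioc_of_le ht.1).2
      (hw.mono_set (Ioc_subset_Ioc_right ht.2))
  calc ENNReal.ofReal (min ‖X t x - Xbar t x‖ 1 * -log δ)
      ≤ ENNReal.ofReal (log (δ + ‖∫ σ in 0..t, w σ‖) - log δ) := by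
        rw [← hZ t ht]
        exact ENNReal.ofReal_le_ofReal (min_mul_neg_log_le hδ0 hδ1 (norm_nonneg _))
    _ ≤ ∫⁻ s in Ioc 0 t, ENNReal.ofReal (‖w s‖ / (δ + ‖∫ σ in 0..s, w σ‖)) :=
        ofReal_log_add_norm_intervalIntegral_sub_log_le hδ0 ht.1 hwt
    _ ≤ ∫⁻ s in Ioc 0 T, ENNReal.ofReal (‖w s‖ / (δ + ‖∫ σ in 0..s, w σ‖)) :=
        lintegral_mono_set (Ioc_subset_Ioc_right ht.2)
    _ ≤ _ := by
        refine lintegral_mono_ae ?_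
        filter_upwards [hlip, ae_restrict_mem measurableSet_Ioc] with s hs hsT
        rw [← hZ s (Ioc_subset_Icc_self hsT), ← ENNReal.ofReal_add (hg _ _)
          (add_nonneg (hg _ _) (div_nonneg (norm_nonneg _) hδ0.le)),
          ← add_assoc]
        exact ENNReal.ofReal_le_ofReal (norm_sub_div_add_norm_sub_le hδ0 (hg s) hs _ _)

variable [BorelSpace H] [SFinite m]

theorem aemeasurable_uncurry (hX : IsRegularLagrangianFlow m T b L X) :
    AEMeasurable (Function.uncurry X) ((volume.restrict (Ioc 0 T)).prod m) :=
  (aemeasurable_uncurry_of_continuousOn measurableSet_Icc hX.1 hX.ae_continuousOn).mono_measure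
    (Measure.prod_mono (Measure.restrict_mono Ioc_subset_Icc_self le_rfl) le_rfl)

theorem aemeasurable_comp {γ : Type*} [MeasurableSpace γ]
    (hX : IsRegularLagrangianFlow m T b L X) {f : ℝ × H → γ} (hf : Measurable f) :
    AEMeasurable (fun p => f (p.1, X p.1 p.2)) ((volume.restrict (Ioc 0 T)).prod m) :=
  hf.comp_aemeasurable (measurable_fst.aemeasurable.prodMk hX.aemeasurable_uncurry)

theorem lintegral_comp_le (hX : IsRegularLagrangianFlow m T b L X) {f : ℝ × H → ℝ≥0∞}
    (hf : Measurable f) :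
    ∫⁻ p, f (p.1, X p.1 p.2) ∂((volume.restrict (Ioc 0 T)).prod m)
      ≤ ENNReal.ofReal L * ∫⁻ p, f p ∂((volume.restrict (Ioc 0 T)).prod m) := by
  rw [lintegral_prod _ (hX.aemeasurable_comp hf), lintegral_prod _ hf.aemeasurable,
    ← lintegral_const_mul' _ _ ENNReal.ofReal_ne_top]
  refine lintegral_mono_ae ?_
  filter_upwards [ae_restrict_mem measurableSet_Ioc] with s hs
  exact lintegral_comp_le_of_map_le_smul (hX.1 s (Ioc_subset_Icc_self hs))
    (hX.2.2 s (Ioc_subset_Icc_self hs)) (hf.comp measurable_prodMk_left)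

theorem lintegral_ofReal_min_mul_neg_log_le (hX : IsRegularLagrangianFlow m T b L X)
    {bbar Xbar : ℝ → H → H} {Lbar : ℝ} (hXbar : IsRegularLagrangianFlow m T bbar Lbar Xbar)
    {g : ℝ → H → ℝ} (hg_meas : Measurable (Function.uncurry g)) (hg : ∀ t x, 0 ≤ g t x)
    (hlip : ∀ᵐ t ∂(volume.restrict (Ioc 0 T)), ∀ x y, ‖b t x - b t y‖ ≤ ‖x - y‖ * (g t x + g t y))
    (hbb : Measurable fun p : ℝ × H => ‖b p.1 p.2 - bbar p.1 p.2‖)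
    {δ : ℝ} (hδ0 : 0 < δ) (hδ1 : δ < 1) {t : ℝ} (ht : t ∈ Icc 0 T) :
    ∫⁻ x, ENNReal.ofReal (min ‖X t x - Xbar t x‖ 1 * -log δ) ∂m
      ≤ ENNReal.ofReal L
          * ∫⁻ p, ENNReal.ofReal (g p.1 p.2) ∂((volume.restrict (Ioc 0 T)).prod m)
        + ENNReal.ofReal Lbar
          * ∫⁻ p, ENNReal.ofReal (g p.1 p.2 + ‖b p.1 p.2 - bbar p.1 p.2‖ / δ)
            ∂((volume.restrict (Ioc 0 T)).prod m) := by
  set P := (volume.restrict (Ioc 0 T)).prod m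
  set F : ℝ × H → ℝ≥0∞ := fun p => ENNReal.ofReal (g p.1 p.2)
  set D : ℝ × H → ℝ≥0∞ := fun p => ENNReal.ofReal (g p.1 p.2 + ‖b p.1 p.2 - bbar p.1 p.2‖ / δ)
  have hF : Measurable F := hg_meas.ennreal_ofReal
  have hD : Measurable D := (hg_meas.add (hbb.div_const δ)).ennreal_ofReal
  calc ∫⁻ x, ENNReal.ofReal (min ‖X t x - Xbar t x‖ 1 * -log δ) ∂m
      ≤ ∫⁻ x, (∫⁻ s in Ioc 0 T, F (s, X s x) + D (s, Xbar s x)) ∂m :=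
        lintegral_mono_ae (hX.ae_ofReal_min_mul_neg_log_le hXbar hg hlip hδ0 hδ1 ht)
    _ = ∫⁻ p, F (p.1, X p.1 p.2) + D (p.1, Xbar p.1 p.2) ∂P :=
        (lintegral_prod_symm _ ((hX.aemeasurable_comp hF).add (hXbar.aemeasurable_comp hD))).symm
    _ = ∫⁻ p, F (p.1, X p.1 p.2) ∂P + ∫⁻ p, D (p.1, Xbar p.1 p.2) ∂P :=
        lintegral_add_left' (hX.aemeasurable_comp hF) _
    _ ≤ ENNReal.ofReal L * ∫⁻ p, F p ∂P + ENNReal.ofReal Lbar * ∫⁻ p, D p ∂P :=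
        add_le_add (hX.lintegral_comp_le hF) (hXbar.lintegral_comp_le hD)

theorem integral_min_mul_neg_log_le [TopologicalSpace.SeparableSpace H]
    (hX : IsRegularLagrangianFlow m T b L X)
    {bbar Xbar : ℝ → H → H} {Lbar : ℝ} (hXbar : IsRegularLagrangianFlow m T bbar Lbar Xbar)
    (hL : 0 ≤ L) (hLbar : 0 ≤ Lbar) {g : ℝ → H → ℝ} (hg_meas : Measurable (Function.uncurry g))
    (hg : ∀ t x, 0 ≤ g t x)
    (hg_int : Integrable (fun p : ℝ × H => g p.1 p.2) ((volume.restrict (Ioc 0 T)).prod m))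
    (hlip : ∀ᵐ t ∂(volume.restrict (Ioc 0 T)), ∀ x y, ‖b t x - b t y‖ ≤ ‖x - y‖ * (g t x + g t y))
    (hbb : Measurable fun p : ℝ × H => ‖b p.1 p.2 - bbar p.1 p.2‖)
    (hbb_int : Integrable (fun p : ℝ × H => ‖b p.1 p.2 - bbar p.1 p.2‖)
      ((volume.restrict (Ioc 0 T)).prod m))
    {δ : ℝ} (hδ0 : 0 < δ) (hδ1 : δ < 1) {t : ℝ} (ht : t ∈ Icc 0 T) :
    (∫ x, min ‖X t x - Xbar t x‖ 1 ∂m) * -log δ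
      ≤ L * ∫ p, g p.1 p.2 ∂((volume.restrict (Ioc 0 T)).prod m)
        + Lbar * (∫ p, g p.1 p.2 ∂((volume.restrict (Ioc 0 T)).prod m)
          + (∫ p, ‖b p.1 p.2 - bbar p.1 p.2‖ ∂((volume.restrict (Ioc 0 T)).prod m)) / δ) := by
  set P := (volume.restrict (Ioc 0 T)).prod m
  have hg0 : 0 ≤ᵐ[P] fun p => g p.1 p.2 := ae_of_all _ fun p => hg p.1 p.2
  have hD0 : 0 ≤ᵐ[P] fun p => g p.1 p.2 + ‖b p.1 p.2 - bbar p.1 p.2‖ / δ :=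
    ae_of_all _ fun p => add_nonneg (hg p.1 p.2) (div_nonneg (norm_nonneg _) hδ0.le)
  have hD_int : Integrable (fun p => g p.1 p.2 + ‖b p.1 p.2 - bbar p.1 p.2‖ / δ) P :=
    hg_int.add (hbb_int.div_const δ)
  have hmin : AEMeasurable (fun x => min ‖X t x - Xbar t x‖ 1) m :=
    ((hX.1 t ht).sub (hXbar.1 t ht)).norm.min aemeasurable_const
  have hlogδ : 0 ≤ -log δ := neg_nonneg.2 (log_neg hδ0 hδ1).le
  rw [← MeasureTheory.integral_mul_const, ← integral_div,
    ← integral_add hg_int (hbb_int.div_const δ)]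
  refine integral_le_of_lintegral_ofReal_le (hmin.mul_const _).aestronglyMeasurable
    (ae_of_all _ fun x => mul_nonneg (by positivity) hlogδ)
    (add_nonneg (mul_nonneg hL (integral_nonneg_of_ae hg0))
      (mul_nonneg hLbar (integral_nonneg_of_ae hD0))) ?_
  calc _ ≤ _ := hX.lintegral_ofReal_min_mul_neg_log_le hXbar hg_meas hg hlip hbb hδ0 hδ1 ht
    _ = _ := by
        rw [← ofReal_integral_eq_lintegral_ofReal hg_int hg0,
          ← ofReal_integral_eq_lintegral_ofReal hD_int hD0, ← ENNReal.ofReal_mul hL,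
          ← ENNReal.ofReal_mul hLbar, ← ENNReal.ofReal_add
            (mul_nonneg hL (integral_nonneg_of_ae hg0))
            (mul_nonneg hLbar (integral_nonneg_of_ae hD0))]

end IsRegularLagrangianFlow

theorem stmt_11_general {H : Type*} [NormedAddCommGroup H] [InnerProductSpace ℝ H]
    [TopologicalSpace.SeparableSpace H] [MeasurableSpace H] [BorelSpace H]
    (m : Measure H) [IsFiniteMeasure m] (T : ℝ)
    (b bbar : ℝ → H → H)
    (hb_meas : Measurable (Function.uncurry b)) (hbbar_meas : Measurable (Function.uncurry bbar))
    (X Xbar : ℝ → H → H) (L Lbar : ℝ)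
    (hX : IsRegularLagrangianFlow m T b L X)
    (hXbar : IsRegularLagrangianFlow m T bbar Lbar Xbar)
    (g : ℝ → H → ℝ) (hg_meas : Measurable (Function.uncurry g))
    (hg_nonneg : ∀ t x, 0 ≤ g t x)
    (hg_int : Integrable (Function.uncurry g) ((volume.restrict (Set.Ioc 0 T)).prod m))
    (G : ℝ) (hG : G = ∫ p, Function.uncurry g p ∂((volume.restrict (Set.Ioc 0 T)).prod m))
    (hlip : ∀ᵐ t ∂(volume.restrict (Set.Ioc 0 T)),
      ∀ x y, ‖b t x - b t y‖ ≤ ‖x - y‖ * (g t x + g t y))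
    (δ : ℝ)
    (hδ : δ = ∫ p, ‖b p.1 p.2 - bbar p.1 p.2‖ ∂((volume.restrict (Set.Ioc 0 T)).prod m))
    (hδ0 : 0 < δ) (hδ1 : δ < 1) :
    ∀ t ∈ Set.Icc 0 T,
      ∫ x, min ‖X t x - Xbar t x‖ 1 ∂m
        ≤ (2 * (L + Lbar) * G + 2 * Lbar + 1) / |Real.log δ| := by
  intro t ht
  have hm : m ≠ 0 := by
    rintro rfl
    simp only [Measure.prod_zero, integral_zero_measure] at hδ
    exact hδ0.ne' hδ
  have hL := hX.one_le (ht.1.trans ht.2) hm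
  have hLbar := hXbar.one_le (ht.1.trans ht.2) hm
  have hG0 : 0 ≤ G := hG ▸ integral_nonneg fun p => hg_nonneg p.1 p.2
  have hlogδ : log δ < 0 := log_neg hδ0 hδ1
  have hstab := hX.integral_min_mul_neg_log_le hXbar (by linarith) (by linarith) hg_meas hg_nonneg
    hg_int hlip (hb_meas.sub hbbar_meas).norm (Integrable.of_integral_ne_zero (hδ ▸ hδ0.ne'))
    hδ0 hδ1 ht
  rw [← hδ, div_self hδ0.ne',
    show ∫ p, g p.1 p.2 ∂((volume.restrict (Ioc 0 T)).prod m) = G from hG.symm] at hstab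
  rw [abs_of_neg hlogδ, le_div_iff₀ (neg_pos.2 hlogδ)]
  nlinarith

/-- Theorem 5.1 of the paper (quantitative stability of regular Lagrangian flows), with the
Sobolev hypothesis on `b` replaced by the pointwise Lusin–Lipschitz property: if `X`, `X̄` are
regular Lagrangian flows of `b`, `b̄` with compressibility constants `L`, `L̄`, if
`|b_t(x) − b_t(y)| ≤ |x − y|(g_t(x) + g_t(y))` with `G = ∫₀ᵀ∫ g dm dt < ∞`, and if
`δ = ∫₀ᵀ∫ |b − b̄| dm dt ∈ (0,1)`, then for every `t ∈ [0,T]`,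
`∫ min(|X_t − X̄_t|, 1) dm ≤ (2(L + L̄)G + 2L̄ + 1)/|log δ|`. -/
theorem stmt_11 {H : Type*} [NormedAddCommGroup H] [InnerProductSpace ℝ H] [CompleteSpace H]
    [TopologicalSpace.SeparableSpace H] [MeasurableSpace H] [BorelSpace H]
    (m : Measure H) [IsFiniteMeasure m] (T : ℝ) (hT : 0 < T)
    (b bbar : ℝ → H → H)
    (hb_meas : Measurable (Function.uncurry b)) (hbbar_meas : Measurable (Function.uncurry bbar))
    (hb_int : Integrable (fun p : ℝ × H => ‖b p.1 p.2‖ + ‖bbar p.1 p.2‖)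
      ((volume.restrict (Set.Ioc 0 T)).prod m))
    (X Xbar : ℝ → H → H) (L Lbar : ℝ)
    (hX : IsRegularLagrangianFlow m T b L X)
    (hXbar : IsRegularLagrangianFlow m T bbar Lbar Xbar)
    (g : ℝ → H → ℝ) (hg_meas : Measurable (Function.uncurry g))
    (hg_nonneg : ∀ t x, 0 ≤ g t x)
    (hg_int : Integrable (Function.uncurry g) ((volume.restrict (Set.Ioc 0 T)).prod m))
    (G : ℝ) (hG : G = ∫ p, Function.uncurry g p ∂((volume.restrict (Set.Ioc 0 T)).prod m))
    (hlip : ∀ᵐ t ∂(volume.restrict (Set.Ioc 0 T)),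
      ∀ x y, ‖b t x - b t y‖ ≤ ‖x - y‖ * (g t x + g t y))
    (δ : ℝ)
    (hδ : δ = ∫ p, ‖b p.1 p.2 - bbar p.1 p.2‖ ∂((volume.restrict (Set.Ioc 0 T)).prod m))
    (hδ0 : 0 < δ) (hδ1 : δ < 1) :
    ∀ t ∈ Set.Icc 0 T,
      ∫ x, min ‖X t x - Xbar t x‖ 1 ∂m
        ≤ (2 * (L + Lbar) * G + 2 * Lbar + 1) / |Real.log δ| :=
  stmt_11_general m T b bbar hb_meas hbbar_meas X Xbar L Lbar hX hXbar g hg_meas hg_nonneg hg_int G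
    hG hlip δ hδ hδ0 hδ1
end
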